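/- Sufficient optimality for the third-order linear problem (PTL) (Theorem 3.2). Let A be a real n×n matrix, B a real n×r matrix, U ⊆ ℝ^r nonempty convex and compact, f : ℝⁿ × ℝⁿ → ℝ convex, S ⊆ ℝⁿ × ℝⁿ convex, and X(t) ⊆ ℝⁿ convex for each t ∈ [0,T]. A feasible pair is (x, u) with u : [0,T] → ℝ^r measurable, u(t) ∈ U for all t, x twice differentiable with x''(t) = x''(0) + ∫₀ᵗ v(s)ds on [0,T] for an integrable v with v(t) = A x(t) + B u(t) a.e., (x^{(j)}(0), x^{(j)}(T)) ∈ S for j = 0,1,2, and x(t) ∈ X(t) for all t ∈ [0,T]. Let (x̃, ũ) be a feasible pair and suppose x* : ℝ → ℝⁿ is twice differentiable with x*''(t) = x*''(0) + ∫₀ᵗ w(s)ds on [0,T] for an integrable w, and v* : [0,T] → ℝⁿ satisfies for a.e. t ∈ [0,T]: ⟨y − x̃(t), v*(t)⟩ ≥ 0 for all y ∈ X(t), −w(t) = Aᵀ x*(t) + v*(t), and ⟨B ũ(t), x*(t)⟩ = sup_{u ∈ U} ⟨B u, x*(t)⟩. Suppose further there exist p ∈ ∂f(x̃(0), x̃(T))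 and μ* ∈ K_S*(x̃(0), x̃(T)) with (x*''(0), −x*''(T)) = p − μ*, and ((−1)^{j+1} x*^{(j)}(0), (−1)^j x*^{(j)}(T)) ∈ K_S*(x̃^{(2−j)}(0), x̃^{(2−j)}(T)) for j = 0,1. Then f(x(0), x(T)) ≥ f(x̃(0), x̃(T)) for every feasible pair (x, u). -/

import Mathlib

/-!
With `y = x - x̃`, the function `⟨y, x*''⟩ - ⟨y', x*'⟩ + ⟨y'', x*⟩` is absolutely continuous with
derivative `⟨y, w⟩ + ⟨y''', x*⟩` almost everywhere, and the adjoint equation, the dual-cone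
condition on `X(t)` and the maximum principle make this derivative nonpositive. Integrating over
`[0, T]`, the transversality conditions for `j = 0, 1` control the boundary terms in `y''` and
`y'`, which leaves `⟨y(T), x*''(T)⟩ - ⟨y(0), x*''(0)⟩ ≤ 0`. Since `(x*''(0), -x*''(T)) = p - μ*`,
this says `⟨(y(0), y(T)), p⟩ ≥ ⟨(y(0), y(T)), μ*⟩ ≥ 0`, and the subgradient inequality for `p`
concludes.
-/

open MeasureTheory Matrix Set

/-- A feasible pair `(x, u)` (with `v = x'''`) for the third-order linear problem (PTL). -/
def IsFeasiblePTL (n r : ℕ) (T : ℝ)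
    (A : Matrix (Fin n) (Fin n) ℝ) (B : Matrix (Fin n) (Fin r) ℝ)
    (U : Set (Fin r → ℝ))
    (S : Set ((Fin n → ℝ) × (Fin n → ℝ)))
    (X : ℝ → Set (Fin n → ℝ))
    (x : ℝ → (Fin n → ℝ)) (u : ℝ → (Fin r → ℝ)) (v : ℝ → (Fin n → ℝ)) : Prop :=
  Measurable u ∧ (∀ t ∈ Icc (0:ℝ) T, u t ∈ U) ∧
  (∀ j < 2, Differentiable ℝ (iteratedDeriv j x)) ∧
  IntervalIntegrable v volume 0 T ∧
  (∀ t ∈ Icc (0:ℝ) T,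
      iteratedDeriv 2 x t = iteratedDeriv 2 x 0 + ∫ s in (0:ℝ)..t, v s) ∧
  (∀ᵐ t ∂volume, t ∈ Icc (0:ℝ) T → v t = A *ᵥ x t + B *ᵥ u t) ∧
  (∀ j < 3, (iteratedDeriv j x 0, iteratedDeriv j x T) ∈ S) ∧
  (∀ t ∈ Icc (0:ℝ) T, x t ∈ X t)

open Filter Topology

namespace AbsolutelyContinuousOnInterval

theorem congr {X : Type*} [PseudoMetricSpace X] {f g : ℝ → X} {a b : ℝ}
    (hf : AbsolutelyContinuousOnInterval f a b) (hfg : EqOn f g (uIcc a b)) :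
    AbsolutelyContinuousOnInterval g a b := by
  refine hf.congr' (eventually_inf_principal.2 <| Eventually.of_forall fun E hE => ?_)
  refine Finset.sum_congr rfl fun i hi => ?_
  obtain ⟨h₁, h₂⟩ := hE.1 i hi
  rw [hfg h₁, hfg h₂]

theorem of_eqOn_primitive {f g : ℝ → ℝ} {a b : ℝ} (hg : IntervalIntegrable g volume a b)
    (hf : ∀ t ∈ uIcc a b, f t = f a + ∫ s in a..t, g s) :
    AbsolutelyContinuousOnInterval f a b :=
  ((LipschitzWith.const (f a)).lipschitzOnWith.absolutelyContinuousOnInterval.fun_add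
    (hg.absolutelyContinuousOnInterval_intervalIntegral left_mem_uIcc)).congr
    fun t ht => (hf t ht).symm

theorem of_hasDerivAt {f f' : ℝ → ℝ} {a b : ℝ} (hf : ∀ t ∈ uIcc a b, HasDerivAt f (f' t) t)
    (hf' : IntervalIntegrable f' volume a b) : AbsolutelyContinuousOnInterval f a b :=
  of_eqOn_primitive hf' fun t ht => by
    rw [intervalIntegral.integral_eq_sub_of_hasDerivAt
      (fun s hs => hf s (uIcc_subset_uIcc_left ht hs)) (hf'.mono_set (uIcc_subset_uIcc_left ht)),
      add_sub_cancel]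

theorem integral_eq_sub_of_ae_hasDerivAt {f f' : ℝ → ℝ} {a b : ℝ}
    (hf : AbsolutelyContinuousOnInterval f a b)
    (hf' : ∀ᵐ t, t ∈ uIcc a b → HasDerivAt f (f' t) t) :
    ∫ t in a..b, f' t = f b - f a := by
  rw [← hf.integral_deriv_eq_sub]
  refine intervalIntegral.integral_congr_ae ?_
  filter_upwards [hf'] with t ht htab
  exact (ht (uIoc_subset_uIcc htab)).deriv.symm

end AbsolutelyContinuousOnInterval

theorem ae_hasDerivAt_of_eqOn_primitive {E : Type*} [NormedAddCommGroup E] [NormedSpace ℝ E]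
    [CompleteSpace E] {f g : ℝ → E} {a b : ℝ} (hg : IntervalIntegrable g volume a b)
    (hf : ∀ t ∈ uIcc a b, f t = f a + ∫ s in a..t, g s) :
    ∀ᵐ t, t ∈ uIcc a b → HasDerivAt f (g t) t := by
  filter_upwards [hg.ae_hasDerivAt_integral, volume.ae_ne a, volume.ae_ne b]
    with t hderiv hta htb ht
  have hnhds : uIcc a b ∈ 𝓝 t :=
    Icc_mem_nhds (ht.1.lt_of_ne (by grind)) (ht.2.lt_of_ne' (by grind))
  exact ((hderiv ht a left_mem_uIcc).const_add (f a)).congr_of_eventuallyEq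
    (eventually_of_mem hnhds hf)

/-- Green's formula for the skew-adjoint operator `d³/dt³`, with third derivatives `q = p'''` and
`z = y'''` that exist only almost everywhere. -/
theorem lagrange_identity_third_order {a b : ℝ} {p p₁ p₂ q y y₁ y₂ z : ℝ → ℝ}
    (hp : ∀ t ∈ uIcc a b, HasDerivAt p (p₁ t) t) (hp₁ : ∀ t ∈ uIcc a b, HasDerivAt p₁ (p₂ t) t)
    (hq : IntervalIntegrable q volume a b) (hp₂ : ∀ t ∈ uIcc a b, p₂ t = p₂ a + ∫ s in a..t, q s)
    (hy : ∀ t ∈ uIcc a b, HasDerivAt y (y₁ t) t) (hy₁ : ∀ t ∈ uIcc a b, HasDerivAt y₁ (y₂ t) t)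
    (hz : IntervalIntegrable z volume a b) (hy₂ : ∀ t ∈ uIcc a b, y₂ t = y₂ a + ∫ s in a..t, z s) :
    ∫ t in a..b, (y t * q t + z t * p t) =
      (y b * p₂ b - y₁ b * p₁ b + y₂ b * p b) - (y a * p₂ a - y₁ a * p₁ a + y₂ a * p a) := by
  have hp₂ac := AbsolutelyContinuousOnInterval.of_eqOn_primitive hq hp₂
  have hy₂ac := AbsolutelyContinuousOnInterval.of_eqOn_primitive hz hy₂
  have hp₁ac := AbsolutelyContinuousOnInterval.of_hasDerivAt hp₁
    hp₂ac.continuousOn.intervalIntegrable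
  have hy₁ac := AbsolutelyContinuousOnInterval.of_hasDerivAt hy₁
    hy₂ac.continuousOn.intervalIntegrable
  have hpac := AbsolutelyContinuousOnInterval.of_hasDerivAt hp hp₁ac.continuousOn.intervalIntegrable
  have hyac := AbsolutelyContinuousOnInterval.of_hasDerivAt hy hy₁ac.continuousOn.intervalIntegrable
  refine AbsolutelyContinuousOnInterval.integral_eq_sub_of_ae_hasDerivAt
    (((hyac.fun_mul hp₂ac).fun_sub (hy₁ac.fun_mul hp₁ac)).fun_add (hy₂ac.fun_mul hpac)) ?_
  filter_upwards [ae_hasDerivAt_of_eqOn_primitive hq hp₂, ae_hasDerivAt_of_eqOn_primitive hz hy₂]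
    with t hp₂' hy₂' ht
  convert! (((hy t ht).mul (hp₂' ht)).sub ((hy₁ t ht).mul (hp₁ t ht))).add
    ((hy₂' ht).mul (hp t ht)) using 1
  ring

section Pi

variable {ι : Type*} [Fintype ι] {a b : ℝ}

theorem IntervalIntegrable.apply {f : ℝ → ι → ℝ} (hf : IntervalIntegrable f volume a b) (i : ι) :
    IntervalIntegrable (fun t => f t i) volume a b :=
  ⟨(ContinuousLinearMap.proj (R := ℝ) (φ := fun _ : ι => ℝ) i).integrable_comp hf.1,
   (ContinuousLinearMap.proj (R := ℝ) (φ := fun _ : ι => ℝ) i).integrable_comp hf.2⟩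

theorem intervalIntegral.integral_apply {f : ℝ → ι → ℝ} (hf : IntervalIntegrable f volume a b)
    (i : ι) :
    (∫ t in a..b, f t) i = ∫ t in a..b, f t i :=
  ((ContinuousLinearMap.proj (R := ℝ) (φ := fun _ : ι => ℝ) i).intervalIntegral_comp_comm hf).symm

theorem apply_eq_add_integral_apply {f g : ℝ → ι → ℝ} (hg : IntervalIntegrable g volume a b)
    (hf : ∀ t ∈ uIcc a b, f t = f a + ∫ s in a..t, g s) (i : ι) :
    ∀ t ∈ uIcc a b, f t i = f a i + ∫ s in a..t, g s i := fun t ht => by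
  rw [hf t ht, Pi.add_apply,
    intervalIntegral.integral_apply (hg.mono_set (uIcc_subset_uIcc_left ht))]

theorem lagrange_identity_third_order_dotProduct {p p₁ p₂ q y y₁ y₂ z : ℝ → ι → ℝ}
    (hp : ∀ t ∈ uIcc a b, HasDerivAt p (p₁ t) t) (hp₁ : ∀ t ∈ uIcc a b, HasDerivAt p₁ (p₂ t) t)
    (hq : IntervalIntegrable q volume a b) (hp₂ : ∀ t ∈ uIcc a b, p₂ t = p₂ a + ∫ s in a..t, q s)
    (hy : ∀ t ∈ uIcc a b, HasDerivAt y (y₁ t) t) (hy₁ : ∀ t ∈ uIcc a b, HasDerivAt y₁ (y₂ t) t)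
    (hz : IntervalIntegrable z volume a b) (hy₂ : ∀ t ∈ uIcc a b, y₂ t = y₂ a + ∫ s in a..t, z s) :
    ∫ t in a..b, (y t ⬝ᵥ q t + z t ⬝ᵥ p t) =
      (y b ⬝ᵥ p₂ b - y₁ b ⬝ᵥ p₁ b + y₂ b ⬝ᵥ p b) - (y a ⬝ᵥ p₂ a - y₁ a ⬝ᵥ p₁ a + y₂ a ⬝ᵥ p a) := by
  have hcont {f f' : ℝ → ι → ℝ} (hf : ∀ t ∈ uIcc a b, HasDerivAt f (f' t) t) (i : ι) :
      ContinuousOn (fun t => f t i) (uIcc a b) := fun t ht =>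
    (hasDerivAt_pi.1 (hf t ht) i).continuousAt.continuousWithinAt
  have hint (i : ι) : IntervalIntegrable (fun t => y t i * q t i + z t i * p t i) volume a b :=
    ((hq.apply i).continuousOn_mul (hcont hy i)).add ((hz.apply i).mul_continuousOn (hcont hp i))
  calc ∫ t in a..b, (y t ⬝ᵥ q t + z t ⬝ᵥ p t)
      = ∑ i, ∫ t in a..b, (y t i * q t i + z t i * p t i) := by
        rw [← intervalIntegral.integral_finsetSum fun i _ => hint i]
        simp only [dotProduct, Finset.sum_add_distrib]
    _ = ∑ i, ((y b i * p₂ b i - y₁ b i * p₁ b i + y₂ b i * p b i) -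
          (y a i * p₂ a i - y₁ a i * p₁ a i + y₂ a i * p a i)) :=
        Finset.sum_congr rfl fun i _ => lagrange_identity_third_order
          (fun t ht => hasDerivAt_pi.1 (hp t ht) i) (fun t ht => hasDerivAt_pi.1 (hp₁ t ht) i)
          (hq.apply i) (apply_eq_add_integral_apply hq hp₂ i)
          (fun t ht => hasDerivAt_pi.1 (hy t ht) i) (fun t ht => hasDerivAt_pi.1 (hy₁ t ht) i)
          (hz.apply i) (apply_eq_add_integral_apply hz hy₂ i)
    _ = _ := by simp only [dotProduct, Finset.sum_add_distrib, Finset.sum_sub_distrib]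

end Pi

theorem hasDerivAt_iteratedDeriv {E : Type*} [NormedAddCommGroup E] [NormedSpace ℝ E]
    {f : ℝ → E} {k j : ℕ} (hf : ∀ i < k, Differentiable ℝ (iteratedDeriv i f)) (hj : j < k)
    (t : ℝ) : HasDerivAt (iteratedDeriv j f) (iteratedDeriv (j + 1) f t) t := by
  rw [iteratedDeriv_succ]
  exact (hf j hj t).hasDerivAt

theorem hasDerivAt_of_differentiable_iteratedDeriv {E : Type*} [NormedAddCommGroup E]
    [NormedSpace ℝ E] {f : ℝ → E} {k : ℕ} (hf : ∀ i < k, Differentiable ℝ (iteratedDeriv i f))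
    (hk : 0 < k) (t : ℝ) : HasDerivAt f (iteratedDeriv 1 f t) t := by
  simpa only [iteratedDeriv_zero] using hasDerivAt_iteratedDeriv hf hk t

theorem IsCompact.le_sSup_of_continuousOn {α : Type*} [TopologicalSpace α] {U : Set α}
    (hU : IsCompact U) {g : α → ℝ} (hg : ContinuousOn g U) {u : α} (hu : u ∈ U) :
    g u ≤ sSup {c : ℝ | ∃ u' ∈ U, c = g u'} :=
  le_csSup ((hU.image_of_continuousOn hg).bddAbove.mono <| by
    rintro _ ⟨u', hu', rfl⟩
    exact mem_image_of_mem g hu') ⟨u, hu, rfl⟩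

theorem adjoint_variation_nonpos {ι κ : Type*} [Fintype ι] [Fintype κ] (A : Matrix ι ι ℝ)
    (B : Matrix ι κ ℝ) {U : Set (κ → ℝ)} (hU : IsCompact U) {x x' p q w : ι → ℝ} {u u' : κ → ℝ}
    (hu : u ∈ U) (hq : 0 ≤ (x - x') ⬝ᵥ q) (hw : -w = Aᵀ *ᵥ p + q)
    (hmax : (B *ᵥ u') ⬝ᵥ p = sSup {c : ℝ | ∃ u'' ∈ U, c = (B *ᵥ u'') ⬝ᵥ p}) :
    (x - x') ⬝ᵥ w + ((A *ᵥ x + B *ᵥ u) - (A *ᵥ x' + B *ᵥ u')) ⬝ᵥ p ≤ 0 := by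
  have hle : (B *ᵥ u) ⬝ᵥ p ≤ (B *ᵥ u') ⬝ᵥ p :=
    hmax ▸ hU.le_sSup_of_continuousOn (g := fun u'' => (B *ᵥ u'') ⬝ᵥ p) (by fun_prop) hu
  have htranspose : (x - x') ⬝ᵥ (Aᵀ *ᵥ p) = (A *ᵥ (x - x')) ⬝ᵥ p := by
    rw [mulVec_transpose, dotProduct_comm, ← dotProduct_mulVec, dotProduct_comm]
  rw [neg_eq_iff_eq_neg.1 hw, dotProduct_neg, dotProduct_add, htranspose, mulVec_sub]
  simp only [sub_dotProduct, add_dotProduct] at hq ⊢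
  linarith

theorem sufficient_optimality_third_order_linear_general
    (n r : ℕ) (T : ℝ) (hT : 0 < T)
    (A : Matrix (Fin n) (Fin n) ℝ) (B : Matrix (Fin n) (Fin r) ℝ)
    (U : Set (Fin r → ℝ)) (hUcomp : IsCompact U)
    (S : Set ((Fin n → ℝ) × (Fin n → ℝ)))
    (X : ℝ → Set (Fin n → ℝ))
    (f : (Fin n → ℝ) → (Fin n → ℝ) → ℝ)
    -- the reference feasible pair (x̃, ũ) with ṽ = x̃'''
    (xt : ℝ → (Fin n → ℝ)) (ut : ℝ → (Fin r → ℝ)) (vt : ℝ → (Fin n → ℝ))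
    (hfeas : IsFeasiblePTL n r T A B U S X xt ut vt)
    -- the adjoint arc x* (twice differentiable, with x*''' represented by w)
    (xs w : ℝ → (Fin n → ℝ))
    (hxsdiff : ∀ j < 2, Differentiable ℝ (iteratedDeriv j xs))
    (hw : IntervalIntegrable w volume 0 T)
    (hxs : ∀ t ∈ Icc (0:ℝ) T,
      iteratedDeriv 2 xs t = iteratedDeriv 2 xs 0 + ∫ s in (0:ℝ)..t, w s)
    (vs : ℝ → (Fin n → ℝ))
    -- adjoint equation, state dual-cone condition and the maximum principle, a.e. on [0,T]
    (hae : ∀ᵐ t ∂volume, t ∈ Icc (0:ℝ) T →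
      (∀ y ∈ X t, 0 ≤ (y - xt t) ⬝ᵥ vs t) ∧
      (-w t = Aᵀ *ᵥ xs t + vs t) ∧
      ((B *ᵥ ut t) ⬝ᵥ xs t = sSup {c : ℝ | ∃ u' ∈ U, c = (B *ᵥ u') ⬝ᵥ xs t}))
    -- transversality at (x̃(0), x̃(T))
    (hc : ∃ p₀ p₁ μ₀ μ₁ : Fin n → ℝ,
      (∀ y₀ y₁, f (xt 0) (xt T) + (p₀ ⬝ᵥ (y₀ - xt 0) + p₁ ⬝ᵥ (y₁ - xt T)) ≤ f y₀ y₁) ∧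
      (∀ s ∈ S, 0 ≤ (s.1 - xt 0) ⬝ᵥ μ₀ + (s.2 - xt T) ⬝ᵥ μ₁) ∧
      iteratedDeriv 2 xs 0 = p₀ - μ₀ ∧ -(iteratedDeriv 2 xs T) = p₁ - μ₁)
    -- remaining transversality conditions, j = 0, 1
    (hd : ∀ j < 2, ∀ s ∈ S,
      0 ≤ (s.1 - iteratedDeriv (2-j) xt 0) ⬝ᵥ ((-1:ℝ)^(j+1) • iteratedDeriv j xs 0)
        + (s.2 - iteratedDeriv (2-j) xt T) ⬝ᵥ ((-1:ℝ)^j • iteratedDeriv j xs T)) :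
    ∀ x u v, IsFeasiblePTL n r T A B U S X x u v →
      f (xt 0) (xt T) ≤ f (x 0) (x T) := by
  rintro x u v ⟨-, hu, hx, hv, hx₂, hvx, hxS, hxX⟩
  obtain ⟨-, -, hxt, hvt, hxt₂, hvtxt, -, -⟩ := hfeas
  obtain ⟨p₀, p₁, μ₀, μ₁, hsubgrad, hμ, hp₀, hp₁⟩ := hc
  rw [← uIcc_of_le hT.le] at hxs hx₂ hxt₂
  have hderiv {y : ℝ → Fin n → ℝ} (hy : ∀ j < 2, Differentiable ℝ (iteratedDeriv j y)) (t : ℝ) :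
      HasDerivAt y (iteratedDeriv 1 y t) t :=
    hasDerivAt_of_differentiable_iteratedDeriv hy two_pos t
  have hderiv' {y : ℝ → Fin n → ℝ} (hy : ∀ j < 2, Differentiable ℝ (iteratedDeriv j y)) (t : ℝ) :
      HasDerivAt (iteratedDeriv 1 y) (iteratedDeriv 2 y t) t :=
    hasDerivAt_iteratedDeriv hy one_lt_two t
  have hlagrange := lagrange_identity_third_order_dotProduct (y := fun t => x t - xt t)
    (fun t _ => hderiv hxsdiff t) (fun t _ => hderiv' hxsdiff t) hw hxs
    (fun t _ => (hderiv hx t).sub (hderiv hxt t)) (fun t _ => (hderiv' hx t).sub (hderiv' hxt t))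
    (hv.sub hvt) fun t ht => by
      rw [hx₂ t ht, hxt₂ t ht, intervalIntegral.integral_sub
        (hv.mono_set (uIcc_subset_uIcc_left ht)) (hvt.mono_set (uIcc_subset_uIcc_left ht))]
      abel
  have hintegral : ∫ t in (0:ℝ)..T, ((x t - xt t) ⬝ᵥ w t + (v t - vt t) ⬝ᵥ xs t) ≤ 0 := by
    rw [← neg_nonneg, ← intervalIntegral.integral_neg]
    refine intervalIntegral.integral_nonneg_of_ae_restrict hT.le
      ((ae_restrict_iff' measurableSet_Icc).2 ?_)
    filter_upwards [hae, hvx, hvtxt] with t hadj hvxt hvtxtt ht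
    obtain ⟨hX, hwt, hmax⟩ := hadj ht
    rw [Pi.zero_apply, neg_nonneg, hvxt ht, hvtxtt ht]
    exact adjoint_variation_nonpos A B hUcomp (hu t ht) (hX _ (hxX t ht)) hwt hmax
  have htrans₀ := hd 0 two_pos _ (hxS 2 (by norm_num))
  have htrans₁ := hd 1 one_lt_two _ (hxS 1 (by norm_num))
  have hμx := hμ _ (hxS 0 (by norm_num))
  have hsub := hsubgrad (x 0) (x T)
  rw [dotProduct_comm p₀, dotProduct_comm p₁] at hsub
  beta_reduce at hlagrange
  rw [hlagrange, neg_eq_iff_eq_neg.1 hp₁, hp₀, neg_sub] at hintegral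
  norm_num [dotProduct_sub] at htrans₀ htrans₁ hμx hsub hintegral
  linarith

/-- Theorem 3.2: sufficient optimality condition for the third-order linear
control problem (PTL). -/
theorem sufficient_optimality_third_order_linear
    (n r : ℕ) (hn : 1 ≤ n) (hr : 1 ≤ r) (T : ℝ) (hT : 0 < T)
    (A : Matrix (Fin n) (Fin n) ℝ) (B : Matrix (Fin n) (Fin r) ℝ)
    (U : Set (Fin r → ℝ)) (hUne : U.Nonempty) (hUconv : Convex ℝ U) (hUcomp : IsCompact U)
    (S : Set ((Fin n → ℝ) × (Fin n → ℝ)))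
    (X : ℝ → Set (Fin n → ℝ))
    (f : (Fin n → ℝ) → (Fin n → ℝ) → ℝ)
    (hf : ConvexOn ℝ univ (fun p : (Fin n → ℝ) × (Fin n → ℝ) => f p.1 p.2))
    (hS : Convex ℝ S)
    (hX : ∀ t ∈ Icc (0:ℝ) T, Convex ℝ (X t))
    -- the reference feasible pair (x̃, ũ) with ṽ = x̃'''
    (xt : ℝ → (Fin n → ℝ)) (ut : ℝ → (Fin r → ℝ)) (vt : ℝ → (Fin n → ℝ))
    (hfeas : IsFeasiblePTL n r T A B U S X xt ut vt)
    -- the adjoint arc x* (twice differentiable, with x*''' represented by w)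
    (xs w : ℝ → (Fin n → ℝ))
    (hxsdiff : ∀ j < 2, Differentiable ℝ (iteratedDeriv j xs))
    (hw : IntervalIntegrable w volume 0 T)
    (hxs : ∀ t ∈ Icc (0:ℝ) T,
      iteratedDeriv 2 xs t = iteratedDeriv 2 xs 0 + ∫ s in (0:ℝ)..t, w s)
    (vs : ℝ → (Fin n → ℝ))
    -- adjoint equation, state dual-cone condition and the maximum principle, a.e. on [0,T]
    (hae : ∀ᵐ t ∂volume, t ∈ Icc (0:ℝ) T →
      (∀ y ∈ X t, 0 ≤ (y - xt t) ⬝ᵥ vs t) ∧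
      (-w t = Aᵀ *ᵥ xs t + vs t) ∧
      ((B *ᵥ ut t) ⬝ᵥ xs t = sSup {c : ℝ | ∃ u' ∈ U, c = (B *ᵥ u') ⬝ᵥ xs t}))
    -- transversality at (x̃(0), x̃(T))
    (hc : ∃ p₀ p₁ μ₀ μ₁ : Fin n → ℝ,
      (∀ y₀ y₁, f (xt 0) (xt T) + (p₀ ⬝ᵥ (y₀ - xt 0) + p₁ ⬝ᵥ (y₁ - xt T)) ≤ f y₀ y₁) ∧
      (∀ s ∈ S, 0 ≤ (s.1 - xt 0) ⬝ᵥ μ₀ + (s.2 - xt T) ⬝ᵥ μ₁) ∧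
      iteratedDeriv 2 xs 0 = p₀ - μ₀ ∧ -(iteratedDeriv 2 xs T) = p₁ - μ₁)
    -- remaining transversality conditions, j = 0, 1
    (hd : ∀ j < 2, ∀ s ∈ S,
      0 ≤ (s.1 - iteratedDeriv (2-j) xt 0) ⬝ᵥ ((-1:ℝ)^(j+1) • iteratedDeriv j xs 0)
        + (s.2 - iteratedDeriv (2-j) xt T) ⬝ᵥ ((-1:ℝ)^j • iteratedDeriv j xs T)) :
    ∀ x u v, IsFeasiblePTL n r T A B U S X x u v →
      f (xt 0) (xt T) ≤ f (x 0) (x T) :=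
  sufficient_optimality_third_order_linear_general n r T hT A B U hUcomp S X f xt ut vt hfeas xs w
    hxsdiff hw hxs vs hae hc hd
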